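/- arXiv:2210.08886 — 2 statements merged into one kernel-verified Lean document; each statement's English description precedes it below -/
import Mathlib

section
/- Let M and Δ be n×n real matrices, and suppose there exist κ_M ≥ 1 and γ_M > 0 with γ_M > ρ(M) such that ‖Mᵏ‖ ≤ κ_M γ_Mᵏ for all k ≥ 0. Then for all k ≥ 0, ‖(M+Δ)ᵏ − Mᵏ‖ ≤ k·κ_M²·(κ_M‖Δ‖ + γ_M)^{k−1}·‖Δ‖. -/
/-!
Write `A = M + Δ` and `β = κ_M ‖Δ‖ + γ_M`. The noncommutative telescoping identity
`Aᵏ - Mᵏ = ∑_{i<k} M^(k-1-i) Δ Aⁱ` bounds `‖Aᵏ - Mᵏ‖` by `κ_M² ‖Δ‖ ∑_{i<k} βⁱ γ_M^(k-1-i)` as soon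
as `‖Aⁱ‖ ≤ κ_M βⁱ` for `i < k`. Since `(β - γ_M) ∑_{i<k} βⁱ γ_M^(k-1-i) = βᵏ - γ_Mᵏ` and
`β - γ_M = κ_M ‖Δ‖`, this gives `‖Aᵏ‖ ≤ κ_M γ_Mᵏ + κ_M (βᵏ - γ_Mᵏ) = κ_M βᵏ`, so the bound on the
powers of `A` propagates by strong induction. Bounding each `βⁱ γ_M^(k-1-i)` by `β^(k-1)` then
gives the theorem.
-/

open Finset

theorem pow_sub_pow_eq_sum_pow_mul_sub_mul_pow {R : Type*} [Ring R] (a b : R) (k : ℕ) :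
    a ^ k - b ^ k = ∑ i ∈ range k, b ^ (k - 1 - i) * (a - b) * a ^ i := by
  have htelescope := sum_range_sub (fun i ↦ b ^ (k - i) * a ^ i) k
  simp only [Nat.sub_self, pow_zero, one_mul, Nat.sub_zero, mul_one] at htelescope
  rw [← htelescope]
  refine sum_congr rfl fun i hi ↦ ?_
  have hik := mem_range.1 hi
  rw [show k - i = k - 1 - i + 1 by omega, show k - (i + 1) = k - 1 - i by omega, pow_succ b,
    pow_succ' a]
  noncomm_ring

section PowerBounds

variable {R : Type*} [NormedRing R] {a b d : R} {κ γ β : ℝ}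

theorem norm_pow_sub_pow_le_of_forall_lt (hκ : 0 ≤ κ) (hγ : 0 ≤ γ)
    (hb : ∀ i, ‖b ^ i‖ ≤ κ * γ ^ i) {k : ℕ} (ha : ∀ i < k, ‖a ^ i‖ ≤ κ * β ^ i) :
    ‖a ^ k - b ^ k‖ ≤ κ ^ 2 * ‖a - b‖ * ∑ i ∈ range k, β ^ i * γ ^ (k - 1 - i) := by
  rw [pow_sub_pow_eq_sum_pow_mul_sub_mul_pow, mul_sum]
  refine (norm_sum_le _ _).trans (sum_le_sum fun i hi ↦ ?_)
  calc ‖b ^ (k - 1 - i) * (a - b) * a ^ i‖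
      ≤ ‖b ^ (k - 1 - i)‖ * ‖a - b‖ * ‖a ^ i‖ := norm_mul₃_le
    _ ≤ κ * γ ^ (k - 1 - i) * ‖a - b‖ * (κ * β ^ i) := by
        gcongr
        exacts [hb _, ha i (mem_range.1 hi)]
    _ = κ ^ 2 * ‖a - b‖ * (β ^ i * γ ^ (k - 1 - i)) := by ring

theorem norm_add_pow_le (hκ : 0 ≤ κ) (hγ : 0 ≤ γ) (hb : ∀ i, ‖b ^ i‖ ≤ κ * γ ^ i) (k : ℕ) :
    ‖(b + d) ^ k‖ ≤ κ * (κ * ‖d‖ + γ) ^ k := by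
  induction k using Nat.strong_induction_on with
  | _ k ih =>
    set β := κ * ‖d‖ + γ
    have hgeom : (∑ i ∈ range k, β ^ i * γ ^ (k - 1 - i)) * (κ * ‖d‖) = β ^ k - γ ^ k := by
      simpa [β] using geom_sum₂_mul β γ k
    have hdiff := norm_pow_sub_pow_le_of_forall_lt hκ hγ hb ih
    rw [add_sub_cancel_left] at hdiff
    calc ‖(b + d) ^ k‖ ≤ ‖b ^ k‖ + ‖(b + d) ^ k - b ^ k‖ := norm_le_norm_add_norm_sub' _ _
      _ ≤ κ * γ ^ k + κ ^ 2 * ‖d‖ * ∑ i ∈ range k, β ^ i * γ ^ (k - 1 - i) :=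
          add_le_add (hb k) hdiff
      _ = κ * β ^ k := by linear_combination κ * hgeom

theorem norm_add_pow_sub_pow_le (hκ : 0 ≤ κ) (hγ : 0 ≤ γ) (hb : ∀ i, ‖b ^ i‖ ≤ κ * γ ^ i)
    (k : ℕ) : ‖(b + d) ^ k - b ^ k‖ ≤ k * κ ^ 2 * (κ * ‖d‖ + γ) ^ (k - 1) * ‖d‖ := by
  set β := κ * ‖d‖ + γ
  have hγβ : γ ≤ β := le_add_of_nonneg_left (by positivity)
  have hsum : ∑ i ∈ range k, β ^ i * γ ^ (k - 1 - i) ≤ k * β ^ (k - 1) := by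
    rw [← geom_sum₂_self]
    gcongr
  have hdiff := norm_pow_sub_pow_le_of_forall_lt (a := b + d) (k := k) hκ hγ hb
    fun i _ ↦ norm_add_pow_le hκ hγ hb i
  rw [add_sub_cancel_left] at hdiff
  calc ‖(b + d) ^ k - b ^ k‖ ≤ κ ^ 2 * ‖d‖ * (k * β ^ (k - 1)) := hdiff.trans (by gcongr)
    _ = k * κ ^ 2 * β ^ (k - 1) * ‖d‖ := by ring

end PowerBounds

theorem stmt1_general {n : ℕ}
    (M Δ : EuclideanSpace ℝ (Fin n) →L[ℝ] EuclideanSpace ℝ (Fin n))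
    (κM γM : ℝ) (hκ : 1 ≤ κM) (hγ : 0 < γM)
    (hpow : ∀ k : ℕ, ‖M ^ k‖ ≤ κM * γM ^ k) :
    ∀ k : ℕ, ‖(M + Δ) ^ k - M ^ k‖ ≤ (k : ℝ) * κM ^ 2 * (κM * ‖Δ‖ + γM) ^ (k - 1) * ‖Δ‖ :=
  norm_add_pow_sub_pow_le (zero_le_one.trans hκ) hγ.le hpow

/-- Matrix power perturbation bound: if `‖Mᵏ‖ ≤ κ_M γ_Mᵏ` for all `k`, with `κ_M ≥ 1` and
`γ_M > ρ(M)`, then `‖(M+Δ)ᵏ − Mᵏ‖ ≤ k κ_M² (κ_M‖Δ‖ + γ_M)^(k−1) ‖Δ‖`. -/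
theorem stmt1 {n : ℕ}
    (M Δ : EuclideanSpace ℝ (Fin n) →L[ℝ] EuclideanSpace ℝ (Fin n))
    (κM γM : ℝ) (hκ : 1 ≤ κM) (hγ : 0 < γM)
    (hρ : spectralRadius ℝ M < ENNReal.ofReal γM)
    (hpow : ∀ k : ℕ, ‖M ^ k‖ ≤ κM * γM ^ k) :
    ∀ k : ℕ, ‖(M + Δ) ^ k - M ^ k‖ ≤ (k : ℝ) * κM ^ 2 * (κM * ‖Δ‖ + γM) ^ (k - 1) * ‖Δ‖ :=
  stmt1_general M Δ κM γM hκ hγ hpow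
end

section
/- Let (P_s)_{s∈𝒰} and (K_s)_{s∈𝒰} satisfy the recursions K_r = −(R_{rr} + B_{sr}ᵀ P_s B_{sr})^{-1} B_{sr}ᵀ P_s A_{sr} and P_r = Q_{rr} + K_rᵀ R_{rr} K_r + (A_{sr} + B_{sr}K_r)ᵀ P_s (A_{sr} + B_{sr}K_r), where for each r, s is its unique successor. Suppose internal states evolve as ζ_{t+1,s} = Σ_{r→s}(A_{sr} + B_{sr}K_r)ζ_{t,r} + Σ_{w_i→s} I_{s,{i}} w_{t,i} with ζ_{0,s} = 0, the ζ_{t,s} for distinct s are independent with mean zero, and w_{t,i} ~ N(0, σ_w² I). Then for each t, E[Σ_s ζ_{t,s}ᵀ P_s ζ_{t,s}] − E[Σ_s ζ_{t+1,s}ᵀ P_s ζ_{t+1,s}] = E[Σ_s ζ_{t,s}ᵀ(Q_{ss} + K_sᵀ R_{ss} K_s)ζ_{t,s}] − J⋆, where J⋆ = σ_w² Σ_{i: w_i→s} Tr(I_{{i},s} P_s I_{s,{i}}). -/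
/-!
Write `L_r = A_{sr} + B_{sr} K_r` for the closed-loop block of `r → s`. The Riccati equation
splits the current cost pointwise as `⟪x, P_r x⟫ = ⟪x, (Q_r + K_rᵀ R_r K_r) x⟫ + ⟪L_r x, P_s L_r x⟫`.
The next state `ζ_{t+1,s}` is a sum of the independent terms `L_r ζ_{t,r}` and `I_{s,i} w_{t,i}`,
at least one factor of every cross term being mean zero, so in expectation its cost is the sum of
the diagonal terms, the noise ones contributing `σ_w² Tr(I_{s,i}ᵀ P_s I_{s,i})`. Summing over `s`,
every `r` occurs once, as a predecessor of its successor, so the closed-loop terms cancel.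
-/

open MeasureTheory ProbabilityTheory
open scoped RealInnerProductSpace

namespace Finset

lemma sum_fiberwise_eval {ι κ M : Type*} [AddCommMonoid M] [Fintype κ] [DecidableEq κ]
    (s : Finset ι) (g : ι → κ) (f : ι → κ → M) :
    ∑ j, ∑ i ∈ s with g i = j, f i j = ∑ i ∈ s, f i (g i) := by
  rw [← sum_fiberwise s g fun i => f i (g i)]
  refine sum_congr rfl fun j _ => sum_congr rfl fun i hi => ?_
  rw [(mem_filter.1 hi).2]

end Finset

section

variable {Ω : Type*} [MeasurableSpace Ω] {μ : Measure Ω}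
  {E F : Type*} [NormedAddCommGroup E] [InnerProductSpace ℝ E]
  [NormedAddCommGroup F] [InnerProductSpace ℝ F]

lemma MeasureTheory.MemLp.integrable_inner_apply {X : Ω → E} {Y : Ω → F} (hX : MemLp X 2 μ)
    (hY : MemLp Y 2 μ) (T : F →L[ℝ] E) : Integrable (fun ω => ⟪X ω, T (Y ω)⟫) μ :=
  memLp_one_iff_integrable.1 <|
    ((innerSL ℝ).bilinearComp (.id ℝ E) T).memLp_of_bilin 1 hX hY

lemma ProbabilityTheory.IndepFun.integral_inner_apply_eq_zero [CompleteSpace E] [CompleteSpace F]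
    [MeasurableSpace E] [BorelSpace E] [MeasurableSpace F] [BorelSpace F]
    {X : Ω → E} {Y : Ω → F} (hXY : IndepFun X Y μ) (hX : Integrable X μ)
    (hY : Integrable Y μ) (hX0 : ∫ ω, X ω ∂μ = 0) (T : F →L[ℝ] E) :
    ∫ ω, ⟪X ω, T (Y ω)⟫ ∂μ = 0 := by
  simpa [hX0] using hXY.integral_bilin hX hY ((innerSL ℝ).bilinearComp (.id ℝ E) T)

lemma integral_inner_apply_self_eq_trace [FiniteDimensional ℝ E] {W : Ω → E}
    (hW : MemLp W 2 μ) (c : ℝ)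
    (hcov : ∀ x y : E, ∫ ω, ⟪x, W ω⟫ * ⟪y, W ω⟫ ∂μ = c * ⟪x, y⟫) (T : E →L[ℝ] E) :
    ∫ ω, ⟪W ω, T (W ω)⟫ ∂μ = c * LinearMap.trace ℝ E T.toLinearMap := by
  let b := stdOrthonormalBasis ℝ E
  have hexp : ∀ x, ⟪x, T x⟫ = ∑ i, ⟪b i, x⟫ * ⟪T.adjoint (b i), x⟫ := fun x => by
    rw [← b.sum_inner_mul_inner]
    simp [real_inner_comm, ContinuousLinearMap.adjoint_inner_left]
  simp_rw [hexp]
  rw [integral_finsetSum _ fun i _ => by exact (hW.const_inner _).integrable_mul (hW.const_inner _),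
    LinearMap.trace_eq_sum_inner _ b, Finset.mul_sum]
  refine Finset.sum_congr rfl fun i _ => ?_
  rw [hcov, ContinuousLinearMap.adjoint_inner_right, real_inner_comm]
  rfl

lemma integral_inner_add_adjoint_comp_apply [CompleteSpace E] [CompleteSpace F] {X : Ω → E}
    (hX : MemLp X 2 μ) (Q : E →L[ℝ] E) (L : E →L[ℝ] F) (P : F →L[ℝ] F) :
    ∫ ω, ⟪X ω, (Q + L.adjoint.comp (P.comp L)) (X ω)⟫ ∂μ =
      ∫ ω, ⟪X ω, Q (X ω)⟫ ∂μ + ∫ ω, ⟪L (X ω), P (L (X ω))⟫ ∂μ := by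
  simp_rw [add_apply, inner_add_right, ContinuousLinearMap.comp_apply,
    ContinuousLinearMap.adjoint_inner_right]
  exact integral_add (hX.integrable_inner_apply hX Q)
    ((L.comp_memLp' hX).integrable_inner_apply (L.comp_memLp' hX) P)

lemma integral_inner_sum_apply_sum {ι : Type*} {Y : ι → Ω → E} (s : Finset ι)
    (hY : ∀ a ∈ s, MemLp (Y a) 2 μ) (T : E →L[ℝ] E)
    (horth : ∀ a ∈ s, ∀ b ∈ s, a ≠ b → ∫ ω, ⟪Y a ω, T (Y b ω)⟫ ∂μ = 0) :
    ∫ ω, ⟪∑ a ∈ s, Y a ω, T (∑ b ∈ s, Y b ω)⟫ ∂μ = ∑ a ∈ s, ∫ ω, ⟪Y a ω, T (Y a ω)⟫ ∂μ := by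
  have hint : ∀ a ∈ s, ∀ b ∈ s, Integrable (fun ω => ⟪Y a ω, T (Y b ω)⟫) μ :=
    fun a ha b hb => (hY a ha).integrable_inner_apply (hY b hb) T
  simp_rw [map_sum, sum_inner, inner_sum]
  rw [integral_finsetSum _ fun a ha => integrable_finsetSum _ (hint a ha)]
  refine Finset.sum_congr rfl fun a ha => ?_
  rw [integral_finsetSum _ (hint a ha)]
  exact Finset.sum_eq_single_of_mem a ha fun b hb hba => horth a ha b hb hba.symm

end

theorem integral_inner_sum_add_sum_apply {Ω : Type*} [MeasurableSpace Ω] {μ : Measure Ω}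
    [IsFiniteMeasure μ] {α β G : Type*} {E : α → Type*} {F : β → Type*}
    [∀ a, NormedAddCommGroup (E a)] [∀ a, InnerProductSpace ℝ (E a)] [∀ a, CompleteSpace (E a)]
    [∀ a, MeasurableSpace (E a)] [∀ a, BorelSpace (E a)]
    [∀ b, NormedAddCommGroup (F b)] [∀ b, InnerProductSpace ℝ (F b)]
    [∀ b, FiniteDimensional ℝ (F b)] [∀ b, MeasurableSpace (F b)] [∀ b, BorelSpace (F b)]
    [NormedAddCommGroup G] [InnerProductSpace ℝ G] [CompleteSpace G]
    [MeasurableSpace G] [BorelSpace G]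
    {X : ∀ a, Ω → E a} {W : ∀ b, Ω → F b} (S : Finset α) (N : Finset β)
    (hX : ∀ a, MemLp (X a) 2 μ) (hW : ∀ b, MemLp (W b) 2 μ)
    (hX0 : ∀ a, ∫ ω, X a ω ∂μ = 0) (hW0 : ∀ b, ∫ ω, W b ω ∂μ = 0) (c : ℝ)
    (hWcov : ∀ b (x y : F b), ∫ ω, ⟪x, W b ω⟫ * ⟪y, W b ω⟫ ∂μ = c * ⟪x, y⟫)
    (hXX : ∀ a a', a ≠ a' → IndepFun (X a) (X a') μ) (hXW : ∀ a b, IndepFun (X a) (W b) μ)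
    (hWW : ∀ b b', b ≠ b' → IndepFun (W b) (W b') μ)
    (L : ∀ a, E a →L[ℝ] G) (M : ∀ b, F b →L[ℝ] G) (T : G →L[ℝ] G) :
    ∫ ω, ⟪∑ a ∈ S, L a (X a ω) + ∑ b ∈ N, M b (W b ω),
        T (∑ a ∈ S, L a (X a ω) + ∑ b ∈ N, M b (W b ω))⟫ ∂μ =
      ∑ a ∈ S, ∫ ω, ⟪L a (X a ω), T (L a (X a ω))⟫ ∂μ +
        c * ∑ b ∈ N, LinearMap.trace ℝ (F b) ((M b).adjoint.comp (T.comp (M b))).toLinearMap := by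
  let Y : α ⊕ β → Ω → G := Sum.elim (fun a ω => L a (X a ω)) (fun b ω => M b (W b ω))
  have hY : ∀ x, MemLp (Y x) 2 μ := by
    rintro (a | b)
    exacts [(L a).comp_memLp' (hX a), (M b).comp_memLp' (hW b)]
  have hYint : ∀ x, Integrable (Y x) μ := fun x => (hY x).integrable one_le_two
  have hY0 : ∀ x, ∫ ω, Y x ω ∂μ = 0 := by
    rintro (a | b)
    · simpa [Y, hX0 a] using ((L a).integral_comp_comm ((hX a).integrable one_le_two))
    · simpa [Y, hW0 b] using ((M b).integral_comp_comm ((hW b).integrable one_le_two))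
  have hYind : ∀ x y, x ≠ y → IndepFun (Y x) (Y y) μ := by
    rintro (a | b) (a' | b') hne
    · exact (hXX a a' fun h => hne (h ▸ rfl)).comp (L a).measurable (L a').measurable
    · exact (hXW a b').comp (L a).measurable (M b').measurable
    · exact (hXW a' b).symm.comp (M b).measurable (L a').measurable
    · exact (hWW b b' fun h => hne (h ▸ rfl)).comp (M b).measurable (M b').measurable
  have hsum : ∀ ω, ∑ a ∈ S, L a (X a ω) + ∑ b ∈ N, M b (W b ω) = ∑ x ∈ S.disjSum N, Y x ω :=
    fun ω => (Finset.sum_disjSum S N fun x => Y x ω).symm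
  simp_rw [hsum]
  rw [integral_inner_sum_apply_sum _ (fun x _ => hY x) T fun x _ y _ hxy =>
      (hYind x y hxy).integral_inner_apply_eq_zero (hYint x) (hYint y) (hY0 x) T,
    Finset.sum_disjSum, Finset.mul_sum]
  congr 1
  refine Finset.sum_congr rfl fun b _ => ?_
  simp_rw [Y, Sum.elim_inr, ← ContinuousLinearMap.adjoint_inner_right]
  exact integral_inner_apply_self_eq_trace (hW b) c (hWcov b) ((M b).adjoint.comp (T.comp (M b)))

theorem stmt19_general
    {U V : Type*} [Fintype U] [DecidableEq U] [Fintype V]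
    (n mdim : U → ℕ) (ddim : V → ℕ) (succ : U → U) (leaf : V → U)
    (A : ∀ s r : U, EuclideanSpace ℝ (Fin (n r)) →L[ℝ] EuclideanSpace ℝ (Fin (n s)))
    (B : ∀ s r : U, EuclideanSpace ℝ (Fin (mdim r)) →L[ℝ] EuclideanSpace ℝ (Fin (n s)))
    (Q P : ∀ r : U, EuclideanSpace ℝ (Fin (n r)) →L[ℝ] EuclideanSpace ℝ (Fin (n r)))
    (Rm : ∀ r : U, EuclideanSpace ℝ (Fin (mdim r)) →L[ℝ] EuclideanSpace ℝ (Fin (mdim r)))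
    (K : ∀ r : U, EuclideanSpace ℝ (Fin (n r)) →L[ℝ] EuclideanSpace ℝ (Fin (mdim r)))
    (ι : ∀ (s : U) (i : V), EuclideanSpace ℝ (Fin (ddim i)) →L[ℝ] EuclideanSpace ℝ (Fin (n s)))
    (hP : ∀ r, P r = Q r + (ContinuousLinearMap.adjoint (K r)).comp ((Rm r).comp (K r)) +
      (ContinuousLinearMap.adjoint (A (succ r) r + (B (succ r) r).comp (K r))).comp
        ((P (succ r)).comp (A (succ r) r + (B (succ r) r).comp (K r))))
    {Ω : Type*} [MeasurableSpace Ω] (μ : Measure Ω) [IsProbabilityMeasure μ]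
    (σw : ℝ)
    (ζ : ℕ → ∀ s : U, Ω → EuclideanSpace ℝ (Fin (n s)))
    (w : ℕ → ∀ i : V, Ω → EuclideanSpace ℝ (Fin (ddim i)))
    (hrec : ∀ t s ω, ζ (t + 1) s ω =
      (∑ r ∈ Finset.univ.filter (fun r => succ r = s),
        (A s r (ζ t r ω) + B s r (K r (ζ t r ω)))) +
      ∑ i ∈ Finset.univ.filter (fun i => leaf i = s), ι s i (w t i ω))
    (hζmeas : ∀ t s, Measurable (ζ t s)) (hwmeas : ∀ t i, Measurable (w t i))
    (hζint : ∀ t s, Integrable (fun ω => ‖ζ t s ω‖ ^ 2) μ)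
    (hwint : ∀ t i, Integrable (fun ω => ‖w t i ω‖ ^ 2) μ)
    (hζmean : ∀ t s, ∫ ω, ζ t s ω ∂μ = 0)
    (hwmean : ∀ t i, ∫ ω, w t i ω ∂μ = 0)
    (hwcov : ∀ t i (x y : EuclideanSpace ℝ (Fin (ddim i))),
      ∫ ω, ⟪x, w t i ω⟫ * ⟪y, w t i ω⟫ ∂μ = σw ^ 2 * ⟪x, y⟫)
    (hindζζ : ∀ t, ∀ r r' : U, r ≠ r' → IndepFun (ζ t r) (ζ t r') μ)
    (hindζw : ∀ t (r : U) (i : V), IndepFun (ζ t r) (w t i) μ)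
    (hindww : ∀ t, ∀ i i' : V, i ≠ i' → IndepFun (w t i) (w t i') μ) :
    ∀ t : ℕ,
      (∫ ω, ∑ s : U, ⟪ζ t s ω, P s (ζ t s ω)⟫ ∂μ) -
        (∫ ω, ∑ s : U, ⟪ζ (t + 1) s ω, P s (ζ (t + 1) s ω)⟫ ∂μ) =
      (∫ ω, ∑ s : U,
          ⟪ζ t s ω,
            (Q s + (ContinuousLinearMap.adjoint (K s)).comp ((Rm s).comp (K s))) (ζ t s ω)⟫ ∂μ) -
        σw ^ 2 * ∑ i : V,
          LinearMap.trace ℝ (EuclideanSpace ℝ (Fin (ddim i)))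
            (((ContinuousLinearMap.adjoint (ι (leaf i) i)).comp
              ((P (leaf i)).comp (ι (leaf i) i))).toLinearMap) := by
  intro t
  have hζL2 : ∀ t s, MemLp (ζ t s) 2 μ := fun t s =>
    (memLp_two_iff_integrable_sq_norm (hζmeas t s).aestronglyMeasurable).2 (hζint t s)
  have hwL2 : ∀ t i, MemLp (w t i) 2 μ := fun t i =>
    (memLp_two_iff_integrable_sq_norm (hwmeas t i).aestronglyMeasurable).2 (hwint t i)
  have hquad : ∀ t s (T : EuclideanSpace ℝ (Fin (n s)) →L[ℝ] EuclideanSpace ℝ (Fin (n s))),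
      Integrable (fun ω => ⟪ζ t s ω, T (ζ t s ω)⟫) μ := fun t s T =>
    (hζL2 t s).integrable_inner_apply (hζL2 t s) T
  have hcur : ∀ s, ∫ ω, ⟪ζ t s ω, P s (ζ t s ω)⟫ ∂μ =
      ∫ ω, ⟪ζ t s ω, (Q s + (K s).adjoint.comp ((Rm s).comp (K s))) (ζ t s ω)⟫ ∂μ +
        ∫ ω, ⟪(A (succ s) s + (B (succ s) s).comp (K s)) (ζ t s ω),
          P (succ s) ((A (succ s) s + (B (succ s) s).comp (K s)) (ζ t s ω))⟫ ∂μ := by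
    intro s
    rw [hP s]
    exact integral_inner_add_adjoint_comp_apply (hζL2 t s) _ _ _
  have hnext : ∀ s, ∫ ω, ⟪ζ (t + 1) s ω, P s (ζ (t + 1) s ω)⟫ ∂μ =
      ∑ r ∈ Finset.univ.filter (fun r => succ r = s),
          ∫ ω, ⟪(A s r + (B s r).comp (K r)) (ζ t r ω),
            P s ((A s r + (B s r).comp (K r)) (ζ t r ω))⟫ ∂μ +
        σw ^ 2 * ∑ i ∈ Finset.univ.filter (fun i => leaf i = s),
          LinearMap.trace ℝ (EuclideanSpace ℝ (Fin (ddim i)))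
            (((ι s i).adjoint.comp ((P s).comp (ι s i))).toLinearMap) := by
    intro s
    simp_rw [hrec t s, ← ContinuousLinearMap.comp_apply (B s _), ← add_apply]
    exact integral_inner_sum_add_sum_apply _ _ (hζL2 t) (hwL2 t) (hζmean t) (hwmean t) _
      (hwcov t) (hindζζ t) (hindζw t) (hindww t) _ _ _
  rw [integral_finsetSum _ fun s _ => hquad t s _, integral_finsetSum _ fun s _ => hquad t s _,
    integral_finsetSum _ fun s _ => hquad (t + 1) s _]
  simp_rw [hcur, hnext]
  rw [Finset.sum_add_distrib, Finset.sum_add_distrib, ← Finset.mul_sum,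
    Finset.sum_fiberwise_eval, Finset.sum_fiberwise_eval]
  ring

/-- Telescoping expected-cost identity for the decentralized Riccati recursion on an
information graph: with `K_r = −(R_{rr} + B_{sr}ᵀ P_s B_{sr})⁻¹ B_{sr}ᵀ P_s A_{sr}` and
`P_r = Q_{rr} + K_rᵀ R_{rr} K_r + (A_{sr}+B_{sr}K_r)ᵀ P_s (A_{sr}+B_{sr}K_r)` (`s` the unique
successor of `r`), internal states `ζ_{t+1,s} = Σ_{r→s}(A_{sr}+B_{sr}K_r)ζ_{t,r} +
Σ_{w_i→s} I_{s,{i}} w_{t,i}` starting from `ζ_{0,s} = 0`, where the `ζ_{t,s}` for distinct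
`s` are independent with mean zero and the noises `w_{t,i}` are mean-zero with covariance
`σ_w² I`, independent of the states and of each other, one has
`E[Σ_s ζ_{t,s}ᵀ P_s ζ_{t,s}] − E[Σ_s ζ_{t+1,s}ᵀ P_s ζ_{t+1,s}]
  = E[Σ_s ζ_{t,s}ᵀ(Q_{ss} + K_sᵀ R_{ss} K_s)ζ_{t,s}] − J⋆`, where
`J⋆ = σ_w² Σ_i Tr(I_{{i},s} P_s I_{s,{i}})`. -/
theorem stmt19
    {U V : Type*} [Fintype U] [DecidableEq U] [Fintype V] [DecidableEq V]
    (n mdim : U → ℕ) (ddim : V → ℕ) (succ : U → U) (leaf : V → U)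
    (A : ∀ s r : U, EuclideanSpace ℝ (Fin (n r)) →L[ℝ] EuclideanSpace ℝ (Fin (n s)))
    (B : ∀ s r : U, EuclideanSpace ℝ (Fin (mdim r)) →L[ℝ] EuclideanSpace ℝ (Fin (n s)))
    (Q P : ∀ r : U, EuclideanSpace ℝ (Fin (n r)) →L[ℝ] EuclideanSpace ℝ (Fin (n r)))
    (Rm : ∀ r : U, EuclideanSpace ℝ (Fin (mdim r)) →L[ℝ] EuclideanSpace ℝ (Fin (mdim r)))
    (K : ∀ r : U, EuclideanSpace ℝ (Fin (n r)) →L[ℝ] EuclideanSpace ℝ (Fin (mdim r)))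
    (ι : ∀ (s : U) (i : V), EuclideanSpace ℝ (Fin (ddim i)) →L[ℝ] EuclideanSpace ℝ (Fin (n s)))
    (hK : ∀ r, K r =
      -((Ring.inverse (Rm r +
          (ContinuousLinearMap.adjoint (B (succ r) r)).comp
            ((P (succ r)).comp (B (succ r) r)))).comp
        ((ContinuousLinearMap.adjoint (B (succ r) r)).comp ((P (succ r)).comp (A (succ r) r)))))
    (hP : ∀ r, P r = Q r + (ContinuousLinearMap.adjoint (K r)).comp ((Rm r).comp (K r)) +
      (ContinuousLinearMap.adjoint (A (succ r) r + (B (succ r) r).comp (K r))).comp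
        ((P (succ r)).comp (A (succ r) r + (B (succ r) r).comp (K r))))
    {Ω : Type*} [MeasurableSpace Ω] (μ : Measure Ω) [IsProbabilityMeasure μ]
    (σw : ℝ) (hσw : 0 < σw)
    (ζ : ℕ → ∀ s : U, Ω → EuclideanSpace ℝ (Fin (n s)))
    (w : ℕ → ∀ i : V, Ω → EuclideanSpace ℝ (Fin (ddim i)))
    (hζ0 : ∀ s ω, ζ 0 s ω = 0)
    (hrec : ∀ t s ω, ζ (t + 1) s ω =
      (∑ r ∈ Finset.univ.filter (fun r => succ r = s),
        (A s r (ζ t r ω) + B s r (K r (ζ t r ω)))) +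
      ∑ i ∈ Finset.univ.filter (fun i => leaf i = s), ι s i (w t i ω))
    (hζmeas : ∀ t s, Measurable (ζ t s)) (hwmeas : ∀ t i, Measurable (w t i))
    (hζint : ∀ t s, Integrable (fun ω => ‖ζ t s ω‖ ^ 2) μ)
    (hwint : ∀ t i, Integrable (fun ω => ‖w t i ω‖ ^ 2) μ)
    (hζmean : ∀ t s, ∫ ω, ζ t s ω ∂μ = 0)
    (hwmean : ∀ t i, ∫ ω, w t i ω ∂μ = 0)
    (hwcov : ∀ t i (x y : EuclideanSpace ℝ (Fin (ddim i))),
      ∫ ω, ⟪x, w t i ω⟫ * ⟪y, w t i ω⟫ ∂μ = σw ^ 2 * ⟪x, y⟫)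
    (hindζζ : ∀ t, ∀ r r' : U, r ≠ r' → IndepFun (ζ t r) (ζ t r') μ)
    (hindζw : ∀ t (r : U) (i : V), IndepFun (ζ t r) (w t i) μ)
    (hindww : ∀ t, ∀ i i' : V, i ≠ i' → IndepFun (w t i) (w t i') μ) :
    ∀ t : ℕ,
      (∫ ω, ∑ s : U, ⟪ζ t s ω, P s (ζ t s ω)⟫ ∂μ) -
        (∫ ω, ∑ s : U, ⟪ζ (t + 1) s ω, P s (ζ (t + 1) s ω)⟫ ∂μ) =
      (∫ ω, ∑ s : U,
          ⟪ζ t s ω,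
            (Q s + (ContinuousLinearMap.adjoint (K s)).comp ((Rm s).comp (K s))) (ζ t s ω)⟫ ∂μ) -
        σw ^ 2 * ∑ i : V,
          LinearMap.trace ℝ (EuclideanSpace ℝ (Fin (ddim i)))
            (((ContinuousLinearMap.adjoint (ι (leaf i) i)).comp
              ((P (leaf i)).comp (ι (leaf i) i))).toLinearMap) :=
  stmt19_general n mdim ddim succ leaf A B Q P Rm K ι hP μ σw ζ w hrec hζmeas hwmeas hζint hwint
    hζmean hwmean hwcov hindζζ hindζw hindww
end
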